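/- (Stability Lemma) Let C be a set of transpositions in Sₙ that is sᵢ-stable, meaning sᵢ ∈ C and sᵢCsᵢ = C. Then the divided difference operator ∂ᵢ is defined on all of H_C (the quotient (f − f∗sᵢ)/(xᵢ − x_{i+1}) exists in H), and ∂ᵢ(H_C) ⊆ H_C. -/

import Mathlib

open MvPolynomial

/-- The ring `H = Fun(Sₙ, ℂ[t₁,…,tₙ])`, with pointwise operations. -/
abbrev Hr (n : ℕ) := Equiv.Perm (Fin n) → MvPolynomial (Fin n) ℂ

/-- The element `xᵢ ∈ H`, given by `v ↦ t_{v(i)}`. -/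
noncomputable def xH {n : ℕ} (i : Fin n) : Hr n := fun v => X (v i)

/-- The element `tᵢ ∈ H`, the constant function `v ↦ tᵢ`. -/
noncomputable def tH {n : ℕ} (i : Fin n) : Hr n := fun _ => X i

/-- The right star action on `H`: `(g ∗ w)(v) = g(v w⁻¹)`. -/
noncomputable def starH {n : ℕ} (g : Hr n) (w : Equiv.Perm (Fin n)) : Hr n :=
  fun v => g (v * w⁻¹)

/-- The left dot action on `H`:
`(w · g)(v; t₁,…,tₙ) = g(w⁻¹ v; t_{w(1)},…,t_{w(n)})`. -/
noncomputable def dotH {n : ℕ} (w : Equiv.Perm (Fin n)) (g : Hr n) : Hr n :=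
  fun v => rename (⇑w) (g (w⁻¹ * v))


/-- `f` satisfies the divisibility condition `τ` for a transposition `τ = (j ↔ k)`:
`f − f∗τ` is a multiple of `xⱼ − xₖ` in `H` (i.e. pointwise, with quotients in
`ℂ[t₁,…,tₙ]`). -/
def condP {n : ℕ} (τ : Equiv.Perm (Fin n)) (f : Hr n) : Prop :=
  ∀ j k : Fin n, τ = Equiv.swap j k → (xH j - xH k) ∣ (f - starH f τ)

/-- The subring `H_C` of elements satisfying all conditions in a set `C` of
transpositions. -/
def HCset {n : ℕ} (C : Set (Equiv.Perm (Fin n))) : Set (Hr n) :=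
  {f | ∀ τ ∈ C, condP τ f}

section Aux

variable {σ : Type*} [DecidableEq σ]

lemma prime_X_sub_X {α β : σ} (h : α ≠ β) :
    Prime (X α - X β : MvPolynomial σ ℂ) := by
  classical
  let e : MvPolynomial σ ℂ ≃ₐ[ℂ] Polynomial (MvPolynomial {b : σ // b ≠ β} ℂ) :=
    (renameEquiv ℂ (Equiv.optionSubtypeNe β).symm).trans (optionEquivLeft ℂ _)
  rw [← MulEquiv.prime_iff e.toMulEquiv]
  have h1 : e (X α) = Polynomial.C (X ⟨α, h⟩) := by
    simp [e, renameEquiv_apply, rename_X, Equiv.optionSubtypeNe_symm_of_ne h,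
      optionEquivLeft_X_some]
  have h2 : e (X β) = Polynomial.X := by
    simp [e, renameEquiv_apply, rename_X, Equiv.optionSubtypeNe_symm_self,
      optionEquivLeft_X_none]
  have : e (X α - X β) = -(Polynomial.X - Polynomial.C (X ⟨α, h⟩)) := by
    rw [map_sub, h1, h2]; ring
  rw [show e.toMulEquiv (X α - X β) = e (X α - X β) from rfl, this]
  exact (Polynomial.prime_X_sub_C _).neg

omit [DecidableEq σ] in
lemma X_sub_X_ne_zero {α β : σ} (h : α ≠ β) :
    (X α - X β : MvPolynomial σ ℂ) ≠ 0 :=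
  sub_ne_zero.mpr fun hx => h (X_injective hx)

lemma not_dvd_X_sub_X {α β γ δ : σ} (hαβ : α ≠ β) (hγδ : γ ≠ δ)
    (h1 : ¬(γ = α ∧ δ = β)) (h2 : ¬(γ = β ∧ δ = α)) :
    ¬ ((X α - X β : MvPolynomial σ ℂ) ∣ X γ - X δ) := by
  rintro ⟨c, hc⟩
  obtain ⟨u, hu1, hu2⟩ : ∃ u : σ → ℂ, u α = u β ∧ u γ ≠ u δ := by
    by_cases hγ : γ = α ∨ γ = β
    · have hδα : δ ≠ α := by
        rintro rfl
        rcases hγ with rfl | rfl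
        · exact hγδ rfl
        · exact h2 ⟨rfl, rfl⟩
      have hδβ : δ ≠ β := by
        rintro rfl
        rcases hγ with rfl | rfl
        · exact h1 ⟨rfl, rfl⟩
        · exact hγδ rfl
      refine ⟨fun i => if i = δ then 1 else 0, by simp [hδα.symm, hδβ.symm], ?_⟩
      simp [hγδ]
    · push_neg at hγ
      refine ⟨fun i => if i = γ then 1 else 0, by simp [hγ.1.symm, hγ.2.symm], ?_⟩
      simp [(Ne.symm hγδ)]
  have := congrArg (eval u) hc
  simp only [eval_sub, eval_X, eval_mul, hu1, sub_self, zero_mul] at this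
  exact hu2 (sub_eq_zero.mp this)

end Aux

section StarAux

variable {n : ℕ}

lemma starH_sub (f g : Hr n) (w : Equiv.Perm (Fin n)) :
    starH (f - g) w = starH f w - starH g w := rfl

lemma starH_mul (f g : Hr n) (w : Equiv.Perm (Fin n)) :
    starH (f * g) w = starH f w * starH g w := rfl

lemma starH_starH (f : Hr n) (w₁ w₂ : Equiv.Perm (Fin n)) :
    starH (starH f w₁) w₂ = starH f (w₁ * w₂) := by
  funext v; simp [starH, mul_inv_rev, mul_assoc]

lemma starH_one (f : Hr n) : starH f 1 = f := by
  funext v; simp [starH]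

lemma starH_xH (i : Fin n) (w : Equiv.Perm (Fin n)) :
    starH (xH i) w = xH (w⁻¹ i) := rfl

lemma starH_dvd {f g : Hr n} (w : Equiv.Perm (Fin n)) (h : f ∣ g) :
    starH f w ∣ starH g w := by
  obtain ⟨c, rfl⟩ := h
  exact ⟨starH c w, rfl⟩

end StarAux

/-- Stability Lemma: let `C` be an `s`-stable set of transpositions,
i.e. `s = swap a b ∈ C` (with `b = a + 1`) and `sCs = C`.  Then the divided difference
`∂` is defined on all of `HCset C` (the quotient `(f - f∗s)/(xH a - xH b)` exists in
`H`) and maps `HCset C` into itself. -/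
theorem stability_lemma (n : ℕ) (a b : Fin n) (hab : (a : ℕ) + 1 = b)
    (C : Set (Equiv.Perm (Fin n)))
    (hC : ∀ τ ∈ C, Equiv.Perm.IsSwap τ)
    (hs : Equiv.swap a b ∈ C)
    (hstab : ∀ τ, τ ∈ C ↔ Equiv.swap a b * τ * Equiv.swap a b ∈ C) :
    ∀ f ∈ HCset C, ∃ g : Hr n,
      f - starH f (Equiv.swap a b) = (xH a - xH b) * g ∧ g ∈ HCset C := by
  intro f hf
  have hab' : a ≠ b := by
    intro h
    rw [h] at hab
    omega
  set s : Equiv.Perm (Fin n) := Equiv.swap a b with hs_def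
  have hsinv : s⁻¹ = s := Equiv.swap_inv a b
  have hss : s * s = 1 := Equiv.swap_mul_self a b
  obtain ⟨g, hg⟩ := hf s hs a b hs_def
  refine ⟨g, hg, ?_⟩
  intro τ hτ j k hjk
  have hjk' : j ≠ k := by
    rintro rfl
    obtain ⟨x, y, hxy, hxyτ⟩ := hC τ hτ
    rw [hjk, Equiv.swap_self] at hxyτ
    apply hxy
    have h5 := congrArg (fun e => e x) hxyτ
    simpa [Equiv.swap_apply_left] using h5
  by_cases hcase : τ = s
  · -- case τ = s : show g - g∗s = 0
    subst hcase
    have e2 := congrArg (fun h => starH h s) hg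
    simp only [starH_sub, starH_mul, starH_starH, hss, starH_one, starH_xH, hsinv] at e2
    -- e2 : starH f s - f = (xH (s a) - xH (s b)) * starH g s
    have hsa : s a = b := Equiv.swap_apply_left a b
    have hsb : s b = a := Equiv.swap_apply_right a b
    rw [hsa, hsb] at e2
    have e3 : (xH a - xH b) * g = (xH a - xH b) * starH g s := by
      linear_combination -hg - e2
    have : g = starH g s := by
      funext v
      have hv := congrFun e3 v
      have hne : (X (v a) - X (v b) : MvPolynomial (Fin n) ℂ) ≠ 0 :=
        X_sub_X_ne_zero (v.injective.ne hab')
      exact mul_left_cancel₀ hne hv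
    rw [← this, sub_self]
    exact dvd_zero _
  · -- general case
    have hjka : ¬(j = a ∧ k = b) := by
      rintro ⟨rfl, rfl⟩; exact hcase hjk
    have hjkb : ¬(j = b ∧ k = a) := by
      rintro ⟨rfl, rfl⟩
      exact hcase (hjk.trans (Equiv.swap_comm j k))
    have hτinv : τ⁻¹ = τ := by rw [hjk]; exact Equiv.swap_inv j k
    have hτswap : ∀ c : Fin n, τ (τ c) = c := by
      intro c; rw [hjk]; exact Equiv.swap_apply_self j k c
    have h1 : (xH a - xH b) * g = f - starH f s := hg.symm
    have h2 : (xH (τ a) - xH (τ b)) * starH g τ = starH f τ - starH f (s * τ) := by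
      have h3 := congrArg (fun h => starH h τ) h1
      simp only [starH_sub, starH_mul, starH_starH, starH_xH, hτinv] at h3
      exact h3
    -- key ring identity
    have key : (xH a - xH b) * (xH (τ a) - xH (τ b)) * (g - starH g τ) =
        (xH (τ a) - xH (τ b)) * (f - starH f τ)
          + ((xH (τ a) - xH (τ b)) - (xH a - xH b)) * (starH f τ - starH f s)
          - (xH a - xH b) * (starH f s - starH f (s * τ)) := by
      linear_combination (xH (τ a) - xH (τ b)) * h1 - (xH a - xH b) * h2
    -- divisibility pieces
    have dA : (xH j - xH k) ∣ f - starH f τ := hf τ hτ j k hjk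
    have dB : (xH j - xH k) ∣ starH f s - starH f (s * τ) := by
      have hτ' : s * τ * s ∈ C := (hstab τ).mp hτ
      have hτ'eq : s * τ * s = Equiv.swap (s j) (s k) := by
        rw [hjk, Equiv.swap_apply_apply, hsinv]
      have d0 := hf _ hτ' (s j) (s k) hτ'eq
      have d1 := starH_dvd s d0
      simp only [starH_sub, starH_starH, starH_xH, hsinv] at d1
      have hsj : s (s j) = j := Equiv.swap_apply_self a b j
      have hsk : s (s k) = k := Equiv.swap_apply_self a b k
      rw [hsj, hsk] at d1
      have : s * τ * s * s = s * τ := by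
        rw [mul_assoc (s * τ), hss, mul_one]
      rwa [this] at d1
    have dC : (xH j - xH k) ∣ (xH (τ a) - xH (τ b)) - (xH a - xH b) := by
      have hxc : ∀ c : Fin n, (xH j - xH k) ∣ xH (τ c) - xH c := by
        intro c
        rcases eq_or_ne c j with rfl | hcj
        · rw [hjk, Equiv.swap_apply_left]
          exact ⟨-1, by ring⟩
        rcases eq_or_ne c k with rfl | hck
        · rw [hjk, Equiv.swap_apply_right]
        · rw [hjk, Equiv.swap_apply_of_ne_of_ne hcj hck]
          simp
      have hrq : (xH (τ a) - xH (τ b)) - (xH a - xH b)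
          = (xH (τ a) - xH a) - (xH (τ b) - xH b) := by ring
      rw [hrq]
      exact dvd_sub (hxc a) (hxc b)
    have hbig : (xH j - xH k) ∣
        (xH a - xH b) * (xH (τ a) - xH (τ b)) * (g - starH g τ) := by
      rw [key]
      exact dvd_sub (dvd_add (dA.mul_left _) ((dC.mul_right _))) (dB.mul_left _)
    -- pointwise cancellation
    obtain ⟨c, hc⟩ := hbig
    have hpt : ∀ v : Equiv.Perm (Fin n), (xH j - xH k) v ∣ (g - starH g τ) v := by
      intro v
      have hcv : (X (v a) - X (v b)) * (X (v (τ a)) - X (v (τ b)))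
          * ((g - starH g τ) v) = (X (v j) - X (v k)) * c v := congrFun hc v
      have hPprime : Prime ((X (v j) : MvPolynomial (Fin n) ℂ) - X (v k)) :=
        prime_X_sub_X (v.injective.ne hjk')
      have hPQ : ¬ ((X (v j) : MvPolynomial (Fin n) ℂ) - X (v k) ∣ X (v a) - X (v b)) := by
        refine not_dvd_X_sub_X (v.injective.ne hjk') (v.injective.ne hab') ?_ ?_
        · rintro ⟨e1, e2⟩
          exact hjka ⟨(v.injective e1).symm, (v.injective e2).symm⟩
        · rintro ⟨e1, e2⟩
          exact hjkb ⟨(v.injective e2).symm, (v.injective e1).symm⟩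
      have hτab : τ a ≠ τ b := τ.injective.ne hab'
      have hPR : ¬ ((X (v j) : MvPolynomial (Fin n) ℂ) - X (v k) ∣
          X (v (τ a)) - X (v (τ b))) := by
        refine not_dvd_X_sub_X (v.injective.ne hjk') (v.injective.ne hτab) ?_ ?_
        · rintro ⟨e1, e2⟩
          have ha' : τ a = j := v.injective e1
          have hb' : τ b = k := v.injective e2
          have : a = τ j := by rw [← ha', hτswap]
          have hb'' : b = τ k := by rw [← hb', hτswap]
          rw [hjk] at this hb''
          rw [Equiv.swap_apply_left] at this
          rw [Equiv.swap_apply_right] at hb''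
          exact hjkb ⟨hb''.symm, this.symm⟩
        · rintro ⟨e1, e2⟩
          have ha' : τ a = k := v.injective e1
          have hb' : τ b = j := v.injective e2
          have : a = τ k := by rw [← ha', hτswap]
          have hb'' : b = τ j := by rw [← hb', hτswap]
          rw [hjk] at this hb''
          rw [Equiv.swap_apply_right] at this
          rw [Equiv.swap_apply_left] at hb''
          exact hjka ⟨this.symm, hb''.symm⟩
      have hdvd' : (X (v j) : MvPolynomial (Fin n) ℂ) - X (v k) ∣
          (X (v a) - X (v b)) * (X (v (τ a)) - X (v (τ b))) * ((g - starH g τ) v) :=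
        ⟨c v, hcv⟩
      rcases (hPprime.dvd_mul).mp hdvd' with h | h
      · rcases (hPprime.dvd_mul).mp h with h' | h'
        · exact absurd h' hPQ
        · exact absurd h' hPR
      · exact h
    choose w hw using hpt
    exact ⟨w, funext hw⟩
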